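/- For positive integer $c$ and integers $m,n$, the Kloosterman sum satisfies the Selberg identity $S(m,n;c)=\sum_{d\mid(m,n,c)} d\, S(mn/d^2, 1; c/d)$, where the sum runs over positive divisors $d$ of $\gcd(m,n,c)$. -/

import Mathlib

open Finset

noncomputable def e (c : ℕ) (x : ℤ) : ℂ := Complex.exp (2 * Real.pi * Complex.I * x / c)

noncomputable def Kl (m n : ℤ) (c : ℕ) : ℂ :=
  ∑ a ∈ (Finset.range c).filter (fun a => Nat.Coprime a c),
    e c (m * a + n * (((a : ZMod c)⁻¹).val : ℤ))

noncomputable def Xi (k m n : ℤ) (c : ℕ) : ℂ :=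
  ∑ x ∈ Finset.range c, ∑ y ∈ Finset.range c,
    if ((x : ℤ) * y) % c = k % c then e c (m * x + n * y) else 0

/-!
Write `Ξ(k; m, n; c) = ∑_{x y ≡ k (mod c)} e((m x + n y) / c)`. Sorting the pairs by
`g = gcd(x, c)` and writing `x = g a` with `a` a unit mod `c / g`, the congruence forces
`g ∣ k` and `y ≡ a⁻¹ k / g (mod c / g)`; the remaining freedom `y ↦ y + s c / g`, `s < g`,
contributes the complete sum `∑_s e(n s / g)`, which vanishes unless `g ∣ n`. Hence
`Ξ(k; m, n; c) = ∑_{g ∣ (k, n, c)} g S(m, k n / g²; c / g)`. For `Ξ(n; m, 1; c)` only `g = 1`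
occurs, giving `S(m, n; c)`; exchanging the roles of `m` and `n` in `Ξ` and applying the
formula again gives Selberg's identity, up to the symmetry `S(m, n; c) = S(n, m; c)`.
-/

lemma e_eq_zpow (c : ℕ) (x : ℤ) : e c x = Complex.exp (2 * Real.pi * Complex.I / c) ^ x := by
  rw [e, ← Complex.exp_int_mul]
  ring_nf

lemma e_add (c : ℕ) (x y : ℤ) : e c (x + y) = e c x * e c y := by
  simp only [e_eq_zpow, zpow_add₀ (Complex.exp_ne_zero _)]

lemma e_eq_one_iff {c : ℕ} (hc : c ≠ 0) (x : ℤ) : e c x = 1 ↔ (c : ℤ) ∣ x := by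
  rw [e_eq_zpow, (Complex.isPrimitiveRoot_exp c hc).zpow_eq_one_iff_dvd]

lemma e_congr {c : ℕ} {x y : ℤ} (h : (x : ZMod c) = y) : e c x = e c y := by
  rcases eq_or_ne c 0 with rfl | hc
  · exact congrArg _ h
  obtain ⟨t, ht⟩ := ((ZMod.intCast_eq_intCast_iff_dvd_sub _ _ _).mp h)
  rw [show y = x + c * t by omega, e_add, (e_eq_one_iff hc _).mpr (dvd_mul_right _ _), mul_one]

lemma e_mul_mul_left (g c : ℕ) (hg : g ≠ 0) (x : ℤ) : e (g * c) (g * x) = e c x := by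
  simp only [e]
  congr 1
  push_cast
  field_simp

lemma sum_range_e_mul {g : ℕ} (hg : g ≠ 0) (j : ℤ) :
    ∑ s ∈ range g, e g (j * s) = if (g : ℤ) ∣ j then (g : ℂ) else 0 := by
  have hpow (s : ℕ) : e g (j * s) = e g j ^ s := by
    rw [e_eq_zpow, e_eq_zpow, zpow_mul, zpow_natCast]
  simp only [hpow]
  split_ifs with h
  · simp [(e_eq_one_iff hg j).mpr h]
  · rw [geom_sum_eq (mt (e_eq_one_iff hg j).mp h), ← hpow, mul_comm,
      (e_eq_one_iff hg _).mpr (dvd_mul_right _ _)]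
    simp

lemma ZMod.inv_inv_of_isUnit {c : ℕ} {a : ZMod c} (ha : IsUnit a) : a⁻¹⁻¹ = a := by
  obtain ⟨u, rfl⟩ := ha
  rw [ZMod.inv_coe_unit, ZMod.inv_coe_unit, inv_inv]

lemma val_inv_mem_filter_coprime {c : ℕ} [NeZero c] (a : ℕ) (ha : a.Coprime c) :
    ((a : ZMod c)⁻¹).val ∈ (range c).filter (·.Coprime c) := by
  rw [mem_filter, mem_range, ← ZMod.isUnit_iff_coprime, ZMod.natCast_zmod_val]
  have hu := (ZMod.isUnit_iff_coprime a c).mpr ha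
  exact ⟨ZMod.val_lt _,
    isUnit_iff_exists.mpr ⟨_, ZMod.inv_mul_of_unit _ hu, ZMod.mul_inv_of_unit _ hu⟩⟩

lemma val_inv_val_inv {c : ℕ} [NeZero c] {a : ℕ} (ha : a ∈ (range c).filter (·.Coprime c)) :
    ((((a : ZMod c)⁻¹).val : ZMod c)⁻¹).val = a := by
  rw [mem_filter, mem_range] at ha
  rw [ZMod.natCast_zmod_val, ZMod.inv_inv_of_isUnit ((ZMod.isUnit_iff_coprime a c).mpr ha.2),
    ZMod.val_natCast_of_lt ha.1]

lemma Kl_comm (m n : ℤ) (c : ℕ) : Kl m n c = Kl n m c := by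
  rcases eq_or_ne c 0 with rfl | hc
  · simp [Kl]
  have : NeZero c := ⟨hc⟩
  refine sum_nbij' (fun a => ((a : ZMod c)⁻¹).val) (fun a => ((a : ZMod c)⁻¹).val)
    (fun a ha => val_inv_mem_filter_coprime a (mem_filter.mp ha).2)
    (fun a ha => val_inv_mem_filter_coprime a (mem_filter.mp ha).2)
    (fun a ha => val_inv_val_inv ha) (fun a ha => val_inv_val_inv ha) fun a ha => ?_
  rw [val_inv_val_inv ha, add_comm]

lemma Xi_comm (k m n : ℤ) (c : ℕ) : Xi k m n c = Xi k n m c := by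
  rw [Xi, Xi, sum_comm]
  simp only [mul_comm (_ : ℤ), add_comm (m * _)]

lemma sum_filter_gcd_eq {M : Type*} [AddCommMonoid M] {g : ℕ} (hg : g ≠ 0) (c : ℕ)
    (f : ℕ → M) :
    ∑ x ∈ (range (g * c)).filter (fun x => x.gcd (g * c) = g), f x =
      ∑ a ∈ (range c).filter (·.Coprime c), f (g * a) := by
  have hdvd {x : ℕ} (hx : x ∈ (range (g * c)).filter (fun x => x.gcd (g * c) = g)) : g ∣ x :=
    (mem_filter.mp hx).2 ▸ Nat.gcd_dvd_left x (g * c)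
  refine sum_nbij' (· / g) (g * ·) (fun x hx => ?_) (fun a ha => ?_)
    (fun x hx => Nat.mul_div_cancel' (hdvd hx)) (fun a _ => Nat.mul_div_cancel_left a (by omega))
    (fun x hx => by rw [Nat.mul_div_cancel' (hdvd hx)])
  · obtain ⟨a, rfl⟩ := hdvd hx
    simp only [mem_filter, mem_range, Nat.gcd_mul_left] at hx ⊢
    rw [Nat.mul_div_cancel_left a (by omega)]
    exact ⟨Nat.lt_of_mul_lt_mul_left hx.1, (Nat.mul_eq_left hg).mp hx.2⟩
  · simp only [mem_filter, mem_range, Nat.gcd_mul_left] at ha ⊢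
    exact ⟨Nat.mul_lt_mul_of_pos_left ha.1 (by omega), by rw [ha.2, mul_one]⟩

lemma sum_filter_natCast_eq {M : Type*} [AddCommMonoid M] {c : ℕ} [NeZero c] (g : ℕ)
    (z : ZMod c) (f : ℕ → M) :
    ∑ y ∈ (range (g * c)).filter (fun y : ℕ => (y : ZMod c) = z), f y =
      ∑ s ∈ range g, f (z.val + c * s) := by
  have hc : 0 < c := NeZero.pos c
  have hz : z.val < c := ZMod.val_lt z
  have hval {y : ℕ} (hy : (y : ZMod c) = z) : z.val + c * (y / c) = y := by
    rw [← hy, ZMod.val_natCast, Nat.mod_add_div]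
  refine sum_nbij' (· / c) (z.val + c * ·) (fun y hy => ?_) (fun s hs => ?_)
    (fun y hy => hval (mem_filter.mp hy).2) (fun s _ => ?_)
    (fun y hy => by rw [hval (mem_filter.mp hy).2])
  · simp only [mem_filter, mem_range] at hy ⊢
    exact Nat.div_lt_of_lt_mul (by rw [mul_comm]; exact hy.1)
  · simp only [mem_filter, mem_range] at hs ⊢
    refine ⟨by nlinarith, by simp⟩
  · rw [Nat.add_mul_div_left _ _ hc, Nat.div_eq_of_lt hz, zero_add]

lemma natCast_mul_modEq_iff {g c a : ℕ} (hg : g ≠ 0) (ha : a.Coprime c) (y : ℕ) (k : ℤ) :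
    ((g * a : ℕ) * y : ℤ) ≡ k [ZMOD (g * c : ℕ)] ↔
      (g : ℤ) ∣ k ∧ (y : ZMod c) = (a : ZMod c)⁻¹ * (k / g : ℤ) := by
  have hmul : ((g * a : ℕ) * y : ℤ) = g * (a * y) := by push_cast; ring
  rw [hmul, Nat.cast_mul g c]
  by_cases hgk : (g : ℤ) ∣ k
  · obtain ⟨k', rfl⟩ := hgk
    obtain ⟨u, hu⟩ := (ZMod.isUnit_iff_coprime a c).mpr ha
    rw [Int.ModEq.mul_left_cancel_iff' (by exact_mod_cast hg), ← ZMod.intCast_eq_intCast_iff,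
      Int.mul_ediv_cancel_left _ (by exact_mod_cast hg), ← hu, ZMod.inv_coe_unit,
      Units.eq_inv_mul_iff_mul_eq, hu]
    push_cast
    simp
  · simp only [hgk, false_and, iff_false]
    exact fun h => hgk (Int.modEq_zero_iff_dvd.mp ((h.of_mul_right _).symm.trans
      (Int.modEq_zero_iff_dvd.mpr (dvd_mul_right _ _))))

lemma sum_ite_mul_modEq {g c a : ℕ} (hg : g ≠ 0) [NeZero c] (ha : a.Coprime c) (k m n : ℤ) :
    ∑ y ∈ range (g * c), (if ((g * a : ℕ) * y : ℤ) % (g * c : ℕ) = k % (g * c : ℕ)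
        then e (g * c) (m * (g * a : ℕ) + n * y) else 0) =
      if (g : ℤ) ∣ k ∧ (g : ℤ) ∣ n then
        g * e c (m * a + k * n / (g : ℤ) ^ 2 * ((a : ZMod c)⁻¹).val) else 0 := by
  have hcond (y : ℕ) : ((g * a : ℕ) * y : ℤ) % (g * c : ℕ) = k % (g * c : ℕ) ↔
      (g : ℤ) ∣ k ∧ (y : ZMod c) = (a : ZMod c)⁻¹ * (k / g : ℤ) :=
    natCast_mul_modEq_iff hg ha y k
  simp only [← sum_filter, hcond]
  by_cases hgk : (g : ℤ) ∣ k
  swap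
  · simp [hgk]
  obtain ⟨k', rfl⟩ := hgk
  have hg' : (g : ℤ) ≠ 0 := by exact_mod_cast hg
  have hterm (r s : ℕ) : e (g * c) (m * (g * a : ℕ) + n * (r + c * s : ℕ)) =
      e (g * c) (m * (g * a : ℕ) + n * r) * e g (n * s) := by
    rw [← e_mul_mul_left c g (NeZero.ne c) (n * s), mul_comm c g, ← e_add]
    push_cast
    ring_nf
  simp only [dvd_mul_right, true_and, Int.mul_ediv_cancel_left _ hg']
  rw [sum_filter_natCast_eq]
  simp only [hterm, ← mul_sum, sum_range_e_mul hg]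
  split_ifs with hgn
  · obtain ⟨n', rfl⟩ := hgn
    rw [mul_comm, show (g * k' * (g * n') / (g : ℤ) ^ 2) = k' * n' by
        rw [show g * k' * (g * n') = (g : ℤ) ^ 2 * (k' * n') by ring]
        exact Int.mul_ediv_cancel_left _ (pow_ne_zero 2 hg')]
    rw [show m * (g * a : ℕ) + g * n' * (((a : ZMod c)⁻¹ * k').val : ℕ) =
        (g : ℤ) * (m * a + n' * (((a : ZMod c)⁻¹ * k').val : ℕ)) by push_cast; ring,
      e_mul_mul_left g c hg]
    congr 1
    apply e_congr
    push_cast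
    rw [ZMod.natCast_zmod_val, ZMod.natCast_zmod_val]
    ring
  · simp

lemma filter_divisors_dvd_and_dvd (k n : ℤ) {c : ℕ} (hc : c ≠ 0) :
    c.divisors.filter (fun g : ℕ => (g : ℤ) ∣ k ∧ (g : ℤ) ∣ n) =
      (Int.gcd k (Int.gcd n c)).divisors := by
  ext g
  simp only [mem_filter, Nat.mem_divisors, Int.gcd, Int.natAbs_natCast, Nat.dvd_gcd_iff,
    Int.natCast_dvd, ne_eq, Nat.gcd_eq_zero_iff, hc, not_false_eq_true, and_false, and_true]
  tauto

lemma Xi_eq_sum_divisors (k m n : ℤ) {c : ℕ} (hc : c ≠ 0) :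
    Xi k m n c = ∑ g ∈ (Int.gcd k (Int.gcd n c)).divisors,
      (g : ℂ) * Kl m (k * n / (g : ℤ) ^ 2) (c / g) := by
  rw [Xi, ← sum_fiberwise_of_maps_to (g := (·.gcd c)) (t := c.divisors)
    (fun x _ => Nat.mem_divisors.mpr ⟨Nat.gcd_dvd_right x c, hc⟩)]
  have hfiber : ∀ g ∈ c.divisors, ∑ x ∈ (range c).filter (·.gcd c = g), ∑ y ∈ range c,
      (if ((x : ℤ) * y) % c = k % c then e c (m * x + n * y) else 0) =
      if (g : ℤ) ∣ k ∧ (g : ℤ) ∣ n then (g : ℂ) * Kl m (k * n / (g : ℤ) ^ 2) (c / g)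
      else 0 := by
    intro g hg
    obtain ⟨c', rfl⟩ := Nat.dvd_of_mem_divisors hg
    have hg0 : g ≠ 0 := left_ne_zero_of_mul hc
    have : NeZero c' := ⟨right_ne_zero_of_mul hc⟩
    rw [sum_filter_gcd_eq hg0, Nat.mul_div_cancel_left _ (Nat.pos_of_ne_zero hg0), Kl,
      sum_congr rfl fun a ha => sum_ite_mul_modEq hg0 (mem_filter.mp ha).2 k m n]
    split_ifs
    · rw [mul_sum]
    · exact sum_const_zero
  rw [sum_congr rfl hfiber, ← sum_filter, filter_divisors_dvd_and_dvd k n hc]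

lemma Kl_eq_Xi (m n : ℤ) {c : ℕ} (hc : c ≠ 0) : Kl m n c = Xi n m 1 c := by
  simp [Xi_eq_sum_divisors n m 1 hc]

theorem selberg_identity (c : ℕ) (hc : 0 < c) (m n : ℤ) :
    Kl m n c = ∑ d ∈ (Int.gcd m (Int.gcd n c)).divisors,
      (d : ℂ) * Kl (m * n / (d : ℤ) ^ 2) 1 (c / d) := by
  have hgcd : Int.gcd n (Int.gcd m c) = Int.gcd m (Int.gcd n c) := by
    simp only [Int.gcd, Int.natAbs_natCast, Nat.gcd_left_comm]
  rw [Kl_eq_Xi m n hc.ne', Xi_comm, Xi_eq_sum_divisors n 1 m hc.ne', hgcd]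
  exact sum_congr rfl fun d _ => by rw [Kl_comm, mul_comm n m]
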